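/- arXiv:1807.10222 — 3 statements merged into one kernel-verified Lean document; each statement's English description precedes it below -/
import Mathlib

section
/- Let X and M be real Hilbert spaces, b : X × M → ℝ a bounded bilinear form with induced operator B : X → M*, and V = ker B. If the quotient operator B : X/V → M* is an isomorphism with ‖Bw‖ ≥ β‖w‖_{X/V} for all w, then b satisfies the inf-sup condition with constant β: inf_{q∈M\{0}} sup_{v∈X\{0}} b(v,q)/(‖v‖_X ‖q‖_M) ≥ β. -/
/-- If the operator induced by `b` on the quotient `X ⧸ V` (where `V = ker B`) is an
isomorphism onto `M*` bounded below by `β`, then `b` satisfies the inf-sup condition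
with constant `β`. -/
theorem infSup_of_quotient_isomorphism
    {X M : Type*} [NormedAddCommGroup X] [InnerProductSpace ℝ X] [CompleteSpace X]
    [NormedAddCommGroup M] [InnerProductSpace ℝ M] [CompleteSpace M]
    (b : X →L[ℝ] M →L[ℝ] ℝ) (β : ℝ) (hβ : 0 < β)
    (V : Submodule ℝ X) (hV : ∀ v : X, v ∈ V ↔ ∀ q : M, b v q = 0)
    (Bbar : (X ⧸ V) →L[ℝ] (M →L[ℝ] ℝ))
    (hcompat : ∀ x : X, Bbar (V.mkQ x) = b x)
    (hsurj : Function.Surjective Bbar)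
    (hlow : ∀ w : X ⧸ V, β * ‖w‖ ≤ ‖Bbar w‖) :
    ∀ q : M, q ≠ 0 →
      β ≤ sSup {r : ℝ | ∃ v : X, v ≠ 0 ∧ r = b v q / (‖v‖ * ‖q‖)} := by
  intro q hq
  have hq' : 0 < ‖q‖ := norm_pos_iff.mpr hq
  set f : M →L[ℝ] ℝ := (InnerProductSpace.toDual ℝ M q : M →L[ℝ] ℝ) with hf
  obtain ⟨w, hw⟩ := hsurj f
  have hfq : f q = ‖q‖ ^ 2 := by
    simp [hf, InnerProductSpace.toDual_apply_apply, real_inner_self_eq_norm_sq]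
  have hfn : ‖f‖ = ‖q‖ := (InnerProductSpace.toDual ℝ M).norm_map q
  have hwq : β * ‖w‖ ≤ ‖q‖ := by
    have := hlow w
    rw [hw, hfn] at this
    exact this
  have hbdd : BddAbove {r : ℝ | ∃ v : X, v ≠ 0 ∧ r = b v q / (‖v‖ * ‖q‖)} := by
    refine ⟨‖b‖, ?_⟩
    rintro r ⟨v, hv, rfl⟩
    have hv' : 0 < ‖v‖ := norm_pos_iff.mpr hv
    have h1 : b v q ≤ ‖b‖ * ‖v‖ * ‖q‖ := le_trans (le_abs_self _) (b.le_opNorm₂ v q)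
    rw [div_le_iff₀ (by positivity)]
    calc b v q ≤ ‖b‖ * ‖v‖ * ‖q‖ := h1
      _ = ‖b‖ * (‖v‖ * ‖q‖) := by ring
  apply le_of_forall_pos_le_add
  intro ε hε
  -- choose δ
  set δ : ℝ := if ‖w‖ = 0 then ‖q‖ / β else ε * ‖w‖ / β with hδdef
  have hwnn : 0 ≤ ‖w‖ := norm_nonneg w
  have hδpos : 0 < δ := by
    rw [hδdef]
    split_ifs with h
    · positivity
    · have : 0 < ‖w‖ := lt_of_le_of_ne hwnn (Ne.symm h)
      positivity
  obtain ⟨m, hm, hmlt⟩ := Submodule.Quotient.norm_mk_lt w hδpos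
  have hbm : b m q = ‖q‖ ^ 2 := by
    have : Bbar (V.mkQ m) = b m := hcompat m
    rw [show V.mkQ m = w from hm, hw] at this
    rw [← this, hfq]
  have hm0 : m ≠ 0 := by
    intro h
    rw [h] at hbm
    simp at hbm
    exact absurd hbm (by positivity)
  have hmpos : 0 < ‖m‖ := norm_pos_iff.mpr hm0
  have hwm : ‖w‖ ≤ ‖m‖ := by
    rw [← hm]; exact Submodule.Quotient.norm_mk_le V m
  -- key : β * ‖m‖ ≤ ‖q‖ + ε * ‖m‖
  have hkey : β * ‖m‖ ≤ ‖q‖ + ε * ‖m‖ := by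
    rw [hδdef] at hmlt
    split_ifs at hmlt with h
    · -- ‖w‖ = 0 : ‖m‖ < ‖q‖/β
      rw [h, zero_add] at hmlt
      have : β * ‖m‖ ≤ ‖q‖ := by
        rw [← le_div_iff₀' hβ]; exact hmlt.le
      nlinarith [mul_nonneg hε.le hmpos.le]
    · have hδle : β * (ε * ‖w‖ / β) = ε * ‖w‖ := by field_simp
      have h1 : β * ‖m‖ ≤ β * (‖w‖ + ε * ‖w‖ / β) := by
        exact mul_le_mul_of_nonneg_left hmlt.le hβ.le
      have h2 : β * (‖w‖ + ε * ‖w‖ / β) = β * ‖w‖ + ε * ‖w‖ := by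
        field_simp
      have h3 : ε * ‖w‖ ≤ ε * ‖m‖ := mul_le_mul_of_nonneg_left hwm hε.le
      linarith
  have hr : b m q / (‖m‖ * ‖q‖) = ‖q‖ / ‖m‖ := by
    rw [hbm]; field_simp
  have hrin : ‖q‖ / ‖m‖ ∈ {r : ℝ | ∃ v : X, v ≠ 0 ∧ r = b v q / (‖v‖ * ‖q‖)} :=
    ⟨m, hm0, hr.symm⟩
  have : β ≤ ‖q‖ / ‖m‖ + ε := by
    rw [← sub_le_iff_le_add, le_div_iff₀ hmpos, sub_mul]
    linarith
  exact this.trans (add_le_add_left (le_csSup hbdd hrin) ε)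
end

section
/- Let X and M be real Hilbert spaces, a : X × X → ℝ and b : X × M → ℝ bounded bilinear forms, V = {v ∈ X : b(v,q) = 0 for all q ∈ M}. Assume a is coercive on V and b satisfies the inf-sup condition with constant β > 0. Then for every f ∈ X* and g ∈ M* there exists a unique pair (u,p) ∈ X × M with a(u,v) + b(v,p) = f(v) for all v ∈ X and b(u,q) = g(q) for all q ∈ M; moreover there is a constant C (depending only on β, the coercivity constant, and the norms of a and b) such that ‖u‖_X + ‖p‖_M ≤ C(‖f‖_{X*} + ‖g‖_{M*}). -/
open InnerProductSpace RealInnerProductSpace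

/-- Riesz representation of a bilinear form in its second argument. -/
noncomputable def rieszOp {W X : Type*} [NormedAddCommGroup W] [NormedSpace ℝ W]
    [NormedAddCommGroup X] [InnerProductSpace ℝ X] [CompleteSpace X]
    (c : W →L[ℝ] X →L[ℝ] ℝ) : W →L[ℝ] X :=
  LinearMap.mkContinuous
    { toFun := fun q => (InnerProductSpace.toDual ℝ X).symm (c q)
      map_add' := by intros; simp
      map_smul' := by intros; simp }
    ‖c‖ (by intro q; simp [LinearIsometryEquiv.norm_map]; exact c.le_opNorm q)

lemma rieszOp_inner {W X : Type*} [NormedAddCommGroup W] [NormedSpace ℝ W]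
    [NormedAddCommGroup X] [InnerProductSpace ℝ X] [CompleteSpace X]
    (c : W →L[ℝ] X →L[ℝ] ℝ) (q : W) (x : X) : ⟪rieszOp c q, x⟫_ℝ = c q x :=
  InnerProductSpace.toDual_symm_apply

/-- Lax–Milgram solvability: a coercive bilinear form represents every functional. -/
lemma lax_solve {N : Type*} [NormedAddCommGroup N] [InnerProductSpace ℝ N] [CompleteSpace N]
    (A : N →L[ℝ] N →L[ℝ] ℝ) (hA : IsCoercive A) (g : N →L[ℝ] ℝ) :
    ∃ m : N, ∀ q : N, A m q = g q := by
  refine ⟨hA.continuousLinearEquivOfBilin.symm ((InnerProductSpace.toDual ℝ N).symm g),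
    fun q => ?_⟩
  have h1 := hA.continuousLinearEquivOfBilin_apply
    (hA.continuousLinearEquivOfBilin.symm ((InnerProductSpace.toDual ℝ N).symm g)) q
  rw [ContinuousLinearEquiv.apply_symm_apply] at h1
  rw [← h1]
  exact InnerProductSpace.toDual_symm_apply

section Aux

variable {X M : Type*} [NormedAddCommGroup X] [InnerProductSpace ℝ X] [CompleteSpace X]
    [NormedAddCommGroup M] [InnerProductSpace ℝ M] [CompleteSpace M]

/-- Uniqueness part of Babuška–Brezzi. -/
lemma bb_uniq (a : X →L[ℝ] X →L[ℝ] ℝ) (b : X →L[ℝ] M →L[ℝ] ℝ)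
    (α : ℝ) (hα : 0 < α)
    (hcoer : ∀ w : X, (∀ q : M, b w q = 0) → α * ‖w‖ ^ 2 ≤ a w w)
    (β : ℝ) (hβ : 0 < β)
    (T : M →L[ℝ] X) (hTin : ∀ (q : M) (v : X), ⟪T q, v⟫_ℝ = b v q)
    (hT : ∀ q : M, β * ‖q‖ ≤ ‖T q‖)
    (f : X →L[ℝ] ℝ) (g : M →L[ℝ] ℝ) (u u' : X) (p p' : M)
    (h1 : ∀ v : X, a u v + b v p = f v) (h2 : ∀ q : M, b u q = g q)
    (h1' : ∀ v : X, a u' v + b v p' = f v) (h2' : ∀ q : M, b u' q = g q) :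
    u = u' ∧ p = p' := by
  have hTzero : ∀ q : M, T q = 0 → q = 0 := by
    intro q hq0
    have h := hT q
    rw [hq0, norm_zero] at h
    have : ‖q‖ ≤ 0 := by nlinarith
    exact norm_le_zero_iff.mp this
  have hw : ∀ q : M, b (u - u') q = 0 := by
    intro q; simp [h2 q, h2' q]
  have hab : ∀ v : X, a (u - u') v + b v (p - p') = 0 := by
    intro v
    have e1 := h1 v
    have e2 := h1' v
    simp only [map_sub, ContinuousLinearMap.sub_apply]
    linarith
  have hw0 : u - u' = 0 := by
    have h5 : a (u - u') (u - u') = 0 := by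
      linarith [hw (p - p'), hab (u - u')]
    have h6 := hcoer (u - u') hw
    rw [h5] at h6
    have h7 : ‖u - u'‖ ^ 2 ≤ 0 := by
      have h8 : α * ‖u - u'‖ ^ 2 ≤ α * 0 := by linarith
      have h9 := (mul_le_mul_iff_right₀ hα).mp h8
      linarith
    have h10 : ‖u - u'‖ ^ 2 = 0 := le_antisymm h7 (sq_nonneg _)
    have h11 : ‖u - u'‖ = 0 := pow_eq_zero_iff (two_ne_zero) |>.mp h10
    exact norm_eq_zero.mp h11
  have hu : u = u' := sub_eq_zero.mp hw0
  refine ⟨hu, ?_⟩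
  have hp : ∀ v : X, b v (p - p') = 0 := by
    intro v
    have h8 := hab v
    rw [hw0] at h8
    simpa using h8
  have hTp : T (p - p') = 0 := by
    have h9 := hp (T (p - p'))
    rw [← hTin (p - p') (T (p - p'))] at h9
    exact inner_self_eq_zero.mp h9
  exact sub_eq_zero.mp (hTzero _ hTp)

set_option maxHeartbeats 1000000 in
/-- A priori bound part of Babuška–Brezzi. -/
lemma bb_bound (a : X →L[ℝ] X →L[ℝ] ℝ) (b : X →L[ℝ] M →L[ℝ] ℝ)
    (α : ℝ) (hα : 0 < α)
    (hcoer : ∀ w : X, (∀ q : M, b w q = 0) → α * ‖w‖ ^ 2 ≤ a w w)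
    (β : ℝ) (hβ : 0 < β)
    (T : M →L[ℝ] X) (hTin : ∀ (q : M) (v : X), ⟪T q, v⟫_ℝ = b v q)
    (hT : ∀ q : M, β * ‖q‖ ≤ ‖T q‖)
    (f : X →L[ℝ] ℝ) (g : M →L[ℝ] ℝ) (u : X) (p : M)
    (h1 : ∀ v : X, a u v + b v p = f v) (h2 : ∀ q : M, b u q = g q) :
    ‖u‖ + ‖p‖ ≤ ((α⁻¹ * (1 + ‖a‖ * β⁻¹) + β⁻¹) +
      (β⁻¹ * (1 + ‖a‖ * (α⁻¹ * (1 + ‖a‖ * β⁻¹) + β⁻¹))) + 1) * (‖f‖ + ‖g‖) := by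
  have hKa0 : (0:ℝ) ≤ ‖a‖ := norm_nonneg a
  have hf0 : (0:ℝ) ≤ ‖f‖ := norm_nonneg f
  have hg0 : (0:ℝ) ≤ ‖g‖ := norm_nonneg g
  have hαi : (0:ℝ) < α⁻¹ := by positivity
  have hβi : (0:ℝ) < β⁻¹ := by positivity
  have habound : ∀ x y : X, a x y ≤ ‖a‖ * ‖x‖ * ‖y‖ := by
    intro x y
    calc a x y ≤ |a x y| := le_abs_self _
      _ ≤ ‖a x‖ * ‖y‖ := by rw [← Real.norm_eq_abs]; exact (a x).le_opNorm y
      _ ≤ ‖a‖ * ‖x‖ * ‖y‖ := by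
        have := a.le_opNorm x
        nlinarith [norm_nonneg y, norm_nonneg (a x)]
  -- range T is complete
  have hanti : AntilipschitzWith (Real.toNNReal β⁻¹) T := by
    apply ContinuousLinearMap.antilipschitz_of_bound
    intro x
    have h := hT x
    rw [Real.coe_toNNReal _ (by positivity)]
    rw [← mul_le_mul_iff_right₀ hβ, ← mul_assoc]
    calc β * ‖x‖ ≤ ‖T x‖ := h
      _ = (β * β⁻¹) * ‖T x‖ := by field_simp
  haveI hcompl_range : CompleteSpace (LinearMap.range (T : M →ₗ[ℝ] X)) := by
    have h : IsClosed ((LinearMap.range (T : M →ₗ[ℝ] X) : Submodule ℝ X) : Set X) := by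
      rw [LinearMap.coe_range]
      exact hanti.isClosed_range T.uniformContinuous
    exact h.completeSpace_coe
  have hmemV : ∀ v : X, v ∈ (LinearMap.range (T : M →ₗ[ℝ] X))ᗮ ↔ ∀ q : M, b v q = 0 := by
    intro v
    constructor
    · intro hv q
      have h := hv (T q) (LinearMap.mem_range_self _ q)
      rw [← hTin q v]
      first
      | exact h
      | (rw [real_inner_comm]; exact h)
    · intro hv x hx
      obtain ⟨q, rfl⟩ := hx
      have h : (0:ℝ) = ⟪T q, v⟫_ℝ := by rw [hTin q v, hv q]
      first
      | exact h.symm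
      | (rw [real_inner_comm]; exact h.symm)
  have hVperp : ((LinearMap.range (T : M →ₗ[ℝ] X))ᗮ)ᗮ = LinearMap.range (T : M →ₗ[ℝ] X) :=
    Submodule.orthogonal_orthogonal _
  -- decompose u
  obtain ⟨u0, hu0V, u1, hu1Vp, hu⟩ :=
    Submodule.exists_add_mem_mem_orthogonal (K := (LinearMap.range (T : M →ₗ[ℝ] X))ᗮ) u
  obtain ⟨m, hm⟩ : u1 ∈ LinearMap.range (T : M →ₗ[ℝ] X) := by rw [← hVperp]; exact hu1Vp
  have hu0b : ∀ q : M, b u0 q = 0 := (hmemV _).mp hu0V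
  -- bound for u1
  have hu1 : ‖u1‖ ≤ β⁻¹ * ‖g‖ := by
    have e1 : ‖u1‖ ^ 2 = b u1 m := by
      rw [← show T m = u1 from hm, ← hTin m (T m), real_inner_self_eq_norm_sq]
    have e2 : b u1 m = g m := by
      have h := h2 m
      rw [hu, map_add, ContinuousLinearMap.add_apply, hu0b m] at h
      linarith
    have e3 : g m ≤ ‖g‖ * ‖m‖ := by
      calc g m ≤ |g m| := le_abs_self _
        _ ≤ ‖g‖ * ‖m‖ := by rw [← Real.norm_eq_abs]; exact g.le_opNorm m
    have e4 : β * ‖m‖ ≤ ‖u1‖ := by rw [← show T m = u1 from hm]; exact hT m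
    rcases eq_or_lt_of_le (norm_nonneg u1) with h0 | h0
    · rw [← h0]; positivity
    · have e5 : ‖m‖ ≤ β⁻¹ * ‖u1‖ := by
        rw [← mul_le_mul_iff_right₀ hβ, ← mul_assoc]
        field_simp
        linarith
      have e6 : ‖u1‖ ^ 2 ≤ ‖g‖ * (β⁻¹ * ‖u1‖) := by nlinarith
      nlinarith [mul_pos hβ h0]
  -- bound for u0
  have hu0 : ‖u0‖ ≤ α⁻¹ * (‖f‖ + ‖a‖ * ‖u1‖) := by
    have e1 : α * ‖u0‖ ^ 2 ≤ a u0 u0 := hcoer u0 hu0b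
    have e2 : a u u0 = f u0 := by
      have h := h1 u0
      have hb0 : b u0 p = 0 := hu0b p
      linarith
    have e3 : a u0 u0 = f u0 - a u1 u0 := by
      have h : a u u0 = a u0 u0 + a u1 u0 := by
        rw [hu]; simp [map_add, ContinuousLinearMap.add_apply]
      linarith
    have e4 : f u0 ≤ ‖f‖ * ‖u0‖ := by
      calc f u0 ≤ |f u0| := le_abs_self _
        _ ≤ ‖f‖ * ‖u0‖ := by rw [← Real.norm_eq_abs]; exact f.le_opNorm u0
    have e5 : -(a u1 u0) ≤ ‖a‖ * ‖u1‖ * ‖u0‖ := by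
      have h := habound (-u1) u0
      simpa using h
    rcases eq_or_lt_of_le (norm_nonneg u0) with h0 | h0
    · rw [← h0]; positivity
    · have key : α * ‖u0‖ ^ 2 ≤ (‖f‖ + ‖a‖ * ‖u1‖) * ‖u0‖ := by nlinarith
      rw [← mul_le_mul_iff_right₀ hα]
      calc α * ‖u0‖ ≤ ‖f‖ + ‖a‖ * ‖u1‖ := by nlinarith
        _ = α * (α⁻¹ * (‖f‖ + ‖a‖ * ‖u1‖)) := by field_simp
  have hunorm : ‖u‖ ≤ (α⁻¹ * (1 + ‖a‖ * β⁻¹) + β⁻¹) * (‖f‖ + ‖g‖) := by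
    have h : ‖u‖ ≤ ‖u0‖ + ‖u1‖ := by rw [hu]; exact norm_add_le _ _
    have hb1 : ‖a‖ * ‖u1‖ ≤ ‖a‖ * (β⁻¹ * ‖g‖) := mul_le_mul_of_nonneg_left hu1 hKa0
    have hb2 : ‖u0‖ ≤ α⁻¹ * (‖f‖ + ‖a‖ * (β⁻¹ * ‖g‖)) :=
      le_trans hu0 (mul_le_mul_of_nonneg_left (by linarith) hαi.le)
    nlinarith [mul_nonneg (mul_nonneg hαi.le hKa0) (mul_nonneg hβi.le hf0),
      mul_nonneg hβi.le hf0, mul_nonneg hαi.le hg0]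
  -- bound for p
  have hpnorm : ‖p‖ ≤ (β⁻¹ * (1 + ‖a‖ * (α⁻¹ * (1 + ‖a‖ * β⁻¹) + β⁻¹))) * (‖f‖ + ‖g‖) := by
    have e1 : ‖T p‖ ^ 2 = b (T p) p := by rw [← hTin p (T p), real_inner_self_eq_norm_sq]
    have e2 : b (T p) p = f (T p) - a u (T p) := by
      have h := h1 (T p); linarith
    have e3 : f (T p) ≤ ‖f‖ * ‖T p‖ := by
      calc f (T p) ≤ |f (T p)| := le_abs_self _
        _ ≤ ‖f‖ * ‖T p‖ := by rw [← Real.norm_eq_abs]; exact f.le_opNorm _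
    have e4 : -(a u (T p)) ≤ ‖a‖ * ‖u‖ * ‖T p‖ := by
      have h := habound (-u) (T p); simpa using h
    have e5 : ‖T p‖ ≤ ‖f‖ + ‖a‖ * ‖u‖ := by
      rcases eq_or_lt_of_le (norm_nonneg (T p)) with h0 | h0
      · rw [← h0]; positivity
      · nlinarith
    have e6 : β * ‖p‖ ≤ ‖T p‖ := hT p
    have e7 : ‖p‖ ≤ β⁻¹ * (‖f‖ + ‖a‖ * ‖u‖) := by
      rw [← mul_le_mul_iff_right₀ hβ, ← mul_assoc]
      field_simp
      linarith
    have hb3 : ‖a‖ * ‖u‖ ≤ ‖a‖ * ((α⁻¹ * (1 + ‖a‖ * β⁻¹) + β⁻¹) * (‖f‖ + ‖g‖)) :=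
      mul_le_mul_of_nonneg_left hunorm hKa0
    have hb4 : ‖p‖ ≤ β⁻¹ * (‖f‖ + ‖a‖ * ((α⁻¹ * (1 + ‖a‖ * β⁻¹) + β⁻¹) * (‖f‖ + ‖g‖))) :=
      le_trans e7 (mul_le_mul_of_nonneg_left (by linarith) hβi.le)
    nlinarith [mul_nonneg hβi.le hg0]
  nlinarith [hunorm, hpnorm, add_nonneg hf0 hg0]

set_option maxHeartbeats 1000000 in
/-- Existence part of Babuška–Brezzi. -/
lemma bb_exists (a : X →L[ℝ] X →L[ℝ] ℝ) (b : X →L[ℝ] M →L[ℝ] ℝ)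
    (α : ℝ) (hα : 0 < α)
    (hcoer : ∀ w : X, (∀ q : M, b w q = 0) → α * ‖w‖ ^ 2 ≤ a w w)
    (β : ℝ) (hβ : 0 < β)
    (T : M →L[ℝ] X) (hTin : ∀ (q : M) (v : X), ⟪T q, v⟫_ℝ = b v q)
    (hT : ∀ q : M, β * ‖q‖ ≤ ‖T q‖)
    (f : X →L[ℝ] ℝ) (g : M →L[ℝ] ℝ) :
    ∃ (u : X) (p : M), (∀ v : X, a u v + b v p = f v) ∧ ∀ q : M, b u q = g q := by
  -- range T is complete
  have hanti : AntilipschitzWith (Real.toNNReal β⁻¹) T := by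
    apply ContinuousLinearMap.antilipschitz_of_bound
    intro x
    have h := hT x
    rw [Real.coe_toNNReal _ (by positivity)]
    rw [← mul_le_mul_iff_right₀ hβ, ← mul_assoc]
    calc β * ‖x‖ ≤ ‖T x‖ := h
      _ = (β * β⁻¹) * ‖T x‖ := by field_simp
  haveI hcompl_range : CompleteSpace (LinearMap.range (T : M →ₗ[ℝ] X)) := by
    have h : IsClosed ((LinearMap.range (T : M →ₗ[ℝ] X) : Submodule ℝ X) : Set X) := by
      rw [LinearMap.coe_range]
      exact hanti.isClosed_range T.uniformContinuous
    exact h.completeSpace_coe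
  have hmemV : ∀ v : X, v ∈ (LinearMap.range (T : M →ₗ[ℝ] X))ᗮ ↔ ∀ q : M, b v q = 0 := by
    intro v
    constructor
    · intro hv q
      have h := hv (T q) (LinearMap.mem_range_self _ q)
      rw [← hTin q v]
      first
      | exact h
      | (rw [real_inner_comm]; exact h)
    · intro hv x hx
      obtain ⟨q, rfl⟩ := hx
      have h : (0:ℝ) = ⟪T q, v⟫_ℝ := by rw [hTin q v, hv q]
      first
      | exact h.symm
      | (rw [real_inner_comm]; exact h.symm)
  have hVperp : ((LinearMap.range (T : M →ₗ[ℝ] X))ᗮ)ᗮ = LinearMap.range (T : M →ₗ[ℝ] X) :=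
    Submodule.orthogonal_orthogonal _
  haveI : CompleteSpace ((LinearMap.range (T : M →ₗ[ℝ] X))ᗮ) :=
    (Submodule.isClosed_orthogonal _).completeSpace_coe
  -- step 1: solve b (T m) q = g q for all q, via Lax-Milgram on M
  have hAcoer : IsCoercive (((innerSL ℝ).comp T).flip.comp T) := by
    refine ⟨β * β, by positivity, ?_⟩
    intro m
    have hAmm : (((innerSL ℝ).comp T).flip.comp T) m m = ⟪T m, T m⟫_ℝ := by simp
    have key : β * β * ‖m‖ * ‖m‖ ≤ ⟪T m, T m⟫_ℝ := by
      rw [real_inner_self_eq_norm_mul_norm]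
      have h1 := hT m
      have h2 : 0 ≤ β * ‖m‖ := by positivity
      nlinarith [mul_le_mul h1 h1 h2 (norm_nonneg (T m))]
    exact le_of_le_of_eq key hAmm.symm
  obtain ⟨m, hm⟩ := lax_solve _ hAcoer g
  have hmg : ∀ q : M, b (T m) q = g q := by
    intro q
    have h2 : ⟪T q, T m⟫_ℝ = (((innerSL ℝ).comp T).flip.comp T) m q := by simp
    exact ((hTin q (T m)).symm.trans (h2.trans (hm q)))
  -- step 2: solve the problem on V via Lax-Milgram
  have haVcoer : IsCoercive
      ((a.flip.comp ((LinearMap.range (T : M →ₗ[ℝ] X))ᗮ).subtypeL).flip.comp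
        ((LinearMap.range (T : M →ₗ[ℝ] X))ᗮ).subtypeL) := by
    refine ⟨α, hα, ?_⟩
    intro v
    have happ : ((a.flip.comp ((LinearMap.range (T : M →ₗ[ℝ] X))ᗮ).subtypeL).flip.comp
        ((LinearMap.range (T : M →ₗ[ℝ] X))ᗮ).subtypeL) v v = a (v : X) (v : X) := by simp
    have hc := hcoer (v : X) ((hmemV _).mp v.2)
    have key : α * ‖v‖ * ‖v‖ ≤ a (v : X) (v : X) := by
      have hnv : ‖v‖ = ‖(v : X)‖ := rfl
      rw [hnv]
      nlinarith [norm_nonneg (v : X)]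
    exact le_of_le_of_eq key happ.symm
  obtain ⟨u0, hu0⟩ := lax_solve _ haVcoer
    ((f - a (T m)).comp ((LinearMap.range (T : M →ₗ[ℝ] X))ᗮ).subtypeL)
  have hu0eq : ∀ w : (LinearMap.range (T : M →ₗ[ℝ] X))ᗮ, a (u0 : X) (w : X) = f (w : X) - a (T m) (w : X) := by
    intro w
    have h3 : ((a.flip.comp ((LinearMap.range (T : M →ₗ[ℝ] X))ᗮ).subtypeL).flip.comp
        ((LinearMap.range (T : M →ₗ[ℝ] X))ᗮ).subtypeL) u0 w = a (u0 : X) (w : X) := by simp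
    have h4 : ((f - a (T m)).comp ((LinearMap.range (T : M →ₗ[ℝ] X))ᗮ).subtypeL) w
        = f (w : X) - a (T m) (w : X) := by simp
    exact (h3.symm.trans ((hu0 w).trans h4))
  refine ⟨(u0 : X) + T m, ?_⟩
  have hub : ∀ q : M, b ((u0 : X) + T m) q = g q := by
    intro q
    rw [map_add, ContinuousLinearMap.add_apply]
    rw [(hmemV _).mp u0.2 q, hmg q]
    ring
  -- step 3: find p
  have hlV : ∀ v : X, v ∈ (LinearMap.range (T : M →ₗ[ℝ] X))ᗮ → a ((u0 : X) + T m) v = f v := by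
    intro v hv
    rw [map_add, ContinuousLinearMap.add_apply]
    have h := hu0eq ⟨v, hv⟩
    simp only [Submodule.coe_mk] at h
    linarith
  have hp : ∃ p : M, ∀ v : X, b v p = f v - a ((u0 : X) + T m) v := by
    have hrapp : ∀ v : X,
        ⟪(InnerProductSpace.toDual ℝ X).symm (f - a ((u0 : X) + T m)), v⟫_ℝ
        = f v - a ((u0 : X) + T m) v := by
      intro v
      have h : ⟪(InnerProductSpace.toDual ℝ X).symm (f - a ((u0 : X) + T m)), v⟫_ℝ
          = (f - a ((u0 : X) + T m)) v := InnerProductSpace.toDual_symm_apply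
      simpa using h
    have hrVp : (InnerProductSpace.toDual ℝ X).symm (f - a ((u0 : X) + T m))
        ∈ ((LinearMap.range (T : M →ₗ[ℝ] X))ᗮ)ᗮ := by
      rw [Submodule.mem_orthogonal]
      intro v hv
      have h0 : ⟪(InnerProductSpace.toDual ℝ X).symm (f - a ((u0 : X) + T m)), v⟫_ℝ = 0 := by
        rw [hrapp v, hlV v hv]; ring
      first
      | exact h0
      | (rw [real_inner_comm]; exact h0)
    rw [hVperp] at hrVp
    obtain ⟨p, hp⟩ := hrVp
    refine ⟨p, fun v => ?_⟩
    rw [← hTin p v, show T p = _ from hp, hrapp v]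
  obtain ⟨p, hpeq⟩ := hp
  exact ⟨p, fun v => by rw [hpeq v]; ring, hub⟩

end Aux

set_option maxHeartbeats 1000000 in
/-- Babuška–Brezzi theorem: if `a` is coercive on `V = {v : ∀ q, b v q = 0}` and `b`
satisfies the inf-sup condition with constant `β > 0`, then for all `f ∈ X*`, `g ∈ M*`
the mixed variational problem has a unique solution `(u, p)`, with the a priori bound
`‖u‖ + ‖p‖ ≤ C (‖f‖ + ‖g‖)` for a constant `C` independent of `f, g`. -/
theorem babuska_brezzi
    {X M : Type*} [NormedAddCommGroup X] [InnerProductSpace ℝ X] [CompleteSpace X]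
    [NormedAddCommGroup M] [InnerProductSpace ℝ M] [CompleteSpace M]
    (a : X →L[ℝ] X →L[ℝ] ℝ) (b : X →L[ℝ] M →L[ℝ] ℝ)
    (α : ℝ) (hα : 0 < α)
    (hcoer : ∀ w : X, (∀ q : M, b w q = 0) → α * ‖w‖ ^ 2 ≤ a w w)
    (β : ℝ) (hβ : 0 < β)
    (hinfsup : ∀ q : M, q ≠ 0 →
      β ≤ sSup {r : ℝ | ∃ v : X, v ≠ 0 ∧ r = b v q / (‖v‖ * ‖q‖)}) :
    ∃ C > (0 : ℝ), ∀ (f : X →L[ℝ] ℝ) (g : M →L[ℝ] ℝ),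
      (∃! up : X × M, (∀ v : X, a up.1 v + b v up.2 = f v) ∧ ∀ q : M, b up.1 q = g q) ∧
      ∀ (u : X) (p : M), (∀ v : X, a u v + b v p = f v) → (∀ q : M, b u q = g q) →
        ‖u‖ + ‖p‖ ≤ C * (‖f‖ + ‖g‖) := by
  have hTin : ∀ (q : M) (v : X), ⟪rieszOp b.flip q, v⟫_ℝ = b v q := by
    intro q v
    rw [rieszOp_inner]
    simp
  have hT : ∀ q : M, β * ‖q‖ ≤ ‖rieszOp b.flip q‖ := by
    intro q
    rcases eq_or_ne q 0 with rfl | hq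
    · simp
    · have hqn : 0 < ‖q‖ := norm_pos_iff.mpr hq
      have h1 := hinfsup q hq
      have hub : sSup {r : ℝ | ∃ v : X, v ≠ 0 ∧ r = b v q / (‖v‖ * ‖q‖)}
          ≤ ‖rieszOp b.flip q‖ / ‖q‖ := by
        apply Real.sSup_le
        · rintro r ⟨v, hv, rfl⟩
          have hvn : 0 < ‖v‖ := norm_pos_iff.mpr hv
          have hb : b v q ≤ ‖rieszOp b.flip q‖ * ‖v‖ := by
            rw [← hTin q v]; exact real_inner_le_norm _ _
          rw [div_le_div_iff₀ (by positivity) hqn]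
          calc b v q * ‖q‖ ≤ (‖rieszOp b.flip q‖ * ‖v‖) * ‖q‖ := by nlinarith
            _ = ‖rieszOp b.flip q‖ * (‖v‖ * ‖q‖) := by ring
        · positivity
      have h2 := le_trans h1 hub
      calc β * ‖q‖ ≤ (‖rieszOp b.flip q‖ / ‖q‖) * ‖q‖ := by nlinarith
        _ = ‖rieszOp b.flip q‖ := by field_simp
  refine ⟨(α⁻¹ * (1 + ‖a‖ * β⁻¹) + β⁻¹) +
      (β⁻¹ * (1 + ‖a‖ * (α⁻¹ * (1 + ‖a‖ * β⁻¹) + β⁻¹))) + 1, by positivity, ?_⟩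
  intro f g
  constructor
  · obtain ⟨u, p, h1, h2⟩ := bb_exists a b α hα hcoer β hβ (rieszOp b.flip) hTin hT f g
    refine ⟨(u, p), ⟨h1, h2⟩, ?_⟩
    rintro ⟨u', p'⟩ ⟨h1', h2'⟩
    obtain ⟨hu', hp'⟩ := bb_uniq a b α hα hcoer β hβ (rieszOp b.flip) hTin hT
      f g u' u p' p h1' h2' h1 h2
    simp [hu', hp']
  · intro u p h1 h2
    exact bb_bound a b α hα hcoer β hβ (rieszOp b.flip) hTin hT f g u p h1 h2
end

section
/- Let X, M be reflexive Banach spaces, and b : X × M → ℝ a bounded bilinear form satisfying the inf-sup condition with constant β > 0. Then for every g ∈ M* there exists u ∈ X with b(u,q) = g(q) for all q ∈ M and ‖u‖_X ≤ β^{-1}‖g‖_{M*}. -/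
set_option maxHeartbeats 400000


open NormedSpace

theorem key_bound
    {X M : Type*} [NormedAddCommGroup X] [NormedSpace ℝ X]
    [NormedAddCommGroup M] [NormedSpace ℝ M]
    (b : X →L[ℝ] M →L[ℝ] ℝ) (β : ℝ) (hβ : 0 < β)
    (hinfsup : ∀ q : M, q ≠ 0 →
      β ≤ sSup {r : ℝ | ∃ v : X, v ≠ 0 ∧ r = b v q / (‖v‖ * ‖q‖)}) :
    ∀ q : M, β * ‖q‖ ≤ ‖b.flip q‖ := by
  intro q
  rcases eq_or_ne q 0 with rfl | hq
  · simp
  have hq' : 0 < ‖q‖ := norm_pos_iff.mpr hq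
  have hub : ∀ r ∈ {r : ℝ | ∃ v : X, v ≠ 0 ∧ r = b v q / (‖v‖ * ‖q‖)},
      r ≤ ‖b.flip q‖ / ‖q‖ := by
    rintro r ⟨v, hv, rfl⟩
    have hv' : 0 < ‖v‖ := norm_pos_iff.mpr hv
    have h1 : b v q ≤ ‖b.flip q‖ * ‖v‖ := by
      calc b v q = b.flip q v := rfl
        _ ≤ ‖b.flip q v‖ := le_abs_self _
        _ ≤ ‖b.flip q‖ * ‖v‖ := (b.flip q).le_opNorm v
    calc b v q / (‖v‖ * ‖q‖) ≤ (‖b.flip q‖ * ‖v‖) / (‖v‖ * ‖q‖) := by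
          apply div_le_div_of_nonneg_right h1 (by positivity) |>.trans_eq rfl
      _ = ‖b.flip q‖ / ‖q‖ := by field_simp
  by_cases hX : ∃ v : X, v ≠ 0
  · obtain ⟨v, hv⟩ := hX
    have hne : {r : ℝ | ∃ v : X, v ≠ 0 ∧ r = b v q / (‖v‖ * ‖q‖)}.Nonempty :=
      ⟨_, v, hv, rfl⟩
    have := (csSup_le hne hub)
    have hβle : β ≤ ‖b.flip q‖ / ‖q‖ := le_trans (hinfsup q hq) this
    calc β * ‖q‖ ≤ ‖b.flip q‖ / ‖q‖ * ‖q‖ := by nlinarith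
      _ = ‖b.flip q‖ := by field_simp
  · exfalso
    have : {r : ℝ | ∃ v : X, v ≠ 0 ∧ r = b v q / (‖v‖ * ‖q‖)} = ∅ := by
      ext r; simp only [Set.mem_setOf_eq, Set.mem_empty_iff_false, iff_false]
      rintro ⟨v, hv, -⟩; exact hX ⟨v, hv⟩
    have h0 := hinfsup q hq
    rw [this, Real.sSup_empty] at h0
    linarith


/-- In reflexive Banach spaces `X`, `M`, if a bounded bilinear form `b` satisfies the
inf-sup condition with constant `β > 0`, then for every `g ∈ M*` there is `u ∈ X` with
`b(u, q) = g(q)` for all `q` and `‖u‖ ≤ β⁻¹‖g‖`. -/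
theorem exists_solution_of_infSup
    {X M : Type*} [NormedAddCommGroup X] [NormedSpace ℝ X] [CompleteSpace X]
    [NormedAddCommGroup M] [NormedSpace ℝ M] [CompleteSpace M]
    (hXrefl : Function.Surjective (NormedSpace.inclusionInDoubleDual ℝ X))
    (hMrefl : Function.Surjective (NormedSpace.inclusionInDoubleDual ℝ M))
    (b : X →L[ℝ] M →L[ℝ] ℝ) (β : ℝ) (hβ : 0 < β)
    (hinfsup : ∀ q : M, q ≠ 0 →
      β ≤ sSup {r : ℝ | ∃ v : X, v ≠ 0 ∧ r = b v q / (‖v‖ * ‖q‖)}) :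
    ∀ g : M →L[ℝ] ℝ, ∃ u : X, (∀ q : M, b u q = g q) ∧ ‖u‖ ≤ β⁻¹ * ‖g‖ := by
  intro g
  have hT : ∀ q : M, β * ‖q‖ ≤ ‖b.flip q‖ := key_bound b β hβ hinfsup
  set T : M →ₗ[ℝ] (X →L[ℝ] ℝ) := (b.flip : M →L[ℝ] X →L[ℝ] ℝ).toLinearMap with hTdef
  have hinj : Function.Injective T := by
    intro q₁ q₂ h
    have : b.flip (q₁ - q₂) = 0 := by
      have : T (q₁ - q₂) = 0 := by rw [map_sub, h, sub_self]
      exact this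
    have h2 := hT (q₁ - q₂)
    rw [this, norm_zero] at h2
    have : ‖q₁ - q₂‖ = 0 := le_antisymm (by nlinarith [norm_nonneg (q₁ - q₂)]) (norm_nonneg _)
    exact sub_eq_zero.mp (norm_eq_zero.mp this)
  set e : M ≃ₗ[ℝ] LinearMap.range T := LinearEquiv.ofInjective T hinj with hedef
  have he : ∀ q : M, (e q : X →L[ℝ] ℝ) = T q := fun q => rfl
  have hesymm : ∀ y : LinearMap.range T, T (e.symm y) = (y : X →L[ℝ] ℝ) := by
    intro y
    rw [← he (e.symm y), e.apply_symm_apply]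
  set ψ₀ : LinearMap.range T →ₗ[ℝ] ℝ := g.toLinearMap ∘ₗ (e.symm : LinearMap.range T →ₗ[ℝ] M) with hψ₀
  have hbound : ∀ y : LinearMap.range T, ‖ψ₀ y‖ ≤ (β⁻¹ * ‖g‖) * ‖y‖ := by
    intro y
    have h1 : ‖ψ₀ y‖ ≤ ‖g‖ * ‖e.symm y‖ := g.le_opNorm _
    have h2 : β * ‖e.symm y‖ ≤ ‖(y : X →L[ℝ] ℝ)‖ := by
      have := hT (e.symm y); rwa [show b.flip (e.symm y) = T (e.symm y) from rfl, hesymm] at this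
    rw [← Submodule.coe_norm y] at h2
    have h3 : ‖e.symm y‖ ≤ β⁻¹ * ‖y‖ := by
      have := mul_le_mul_of_nonneg_left h2 (by positivity : (0:ℝ) ≤ β⁻¹)
      rwa [← mul_assoc, inv_mul_cancel₀ hβ.ne', one_mul] at this
    calc ‖ψ₀ y‖ ≤ ‖g‖ * ‖e.symm y‖ := h1
      _ ≤ ‖g‖ * (β⁻¹ * ‖y‖) := by
          exact mul_le_mul_of_nonneg_left h3 (norm_nonneg g)
      _ = (β⁻¹ * ‖g‖) * ‖y‖ := by ring
  set ψ : LinearMap.range T →L[ℝ] ℝ := LinearMap.mkContinuous (E := LinearMap.range T) ψ₀ (β⁻¹ * ‖g‖) hbound with hψ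
  obtain ⟨Ψ, hΨext, hΨnorm⟩ := exists_extension_norm_eq (LinearMap.range T) ψ
  obtain ⟨u, hu⟩ := hXrefl Ψ
  refine ⟨u, ?_, ?_⟩
  · intro q
    have hmem : T q ∈ LinearMap.range T := LinearMap.mem_range_self T q
    have h1 : b u q = (inclusionInDoubleDual ℝ X u) (b.flip q) := rfl
    rw [h1, hu]
    have h2 : Ψ (b.flip q) = ψ (⟨T q, hmem⟩ : LinearMap.range T) := hΨext ⟨T q, hmem⟩
    rw [h2]
    have h3 : ψ (⟨T q, hmem⟩ : LinearMap.range T) = g (e.symm ⟨T q, hmem⟩) := rfl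
    have h4 : e.symm (⟨T q, hmem⟩ : LinearMap.range T) = q := by
      apply e.injective
      rw [e.apply_symm_apply]
      exact Subtype.ext (he q).symm
    rw [h3, h4]
  · have hnu : ‖u‖ = ‖Ψ‖ := by
      rw [← hu]
      exact ((inclusionInDoubleDualLi ℝ (E := X)).norm_map u).symm
    rw [hnu, hΨnorm]
    refine ContinuousLinearMap.opNorm_le_bound _ (by positivity) ?_; exact hbound
end
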